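/- Let g_0(x,z) = (z²x/(z²+1) − 1)(x² + (z²/(z²+1))x + 1) (that is, g(x,0,z²/(z²+1)) with g(x,u,v) = (u²x+1)(vx−1)(x²+(v−u²)x+1)), let X_0 = {(x,y,z) ∈ ℝ³ : y² + g_0(x,z) = 0}, and let p: X_0 → ℝ be defined by p(x,y,z) = x − z². Then: (a) p is a proper map; (b) p is surjective (indeed p(t, √(t²+1), 0) = t for every t ∈ ℝ); and (c) at every point (x,y,z) ∈ X_0 the total derivative of the map Ψ: ℝ³ → ℝ², Ψ(x,y,z) = (y² + g_0(x,z), x − z²), is surjective. -/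

import Mathlib

noncomputable section

/-- `g₀(x,z) = (z²x/(z²+1) − 1)(x² + (z²/(z²+1))x + 1)`, that is `g(x,0,z²/(z²+1))`
for `g(x,u,v) = (u²x+1)(vx−1)(x²+(v−u²)x+1)`. -/
def g₀ (x z : ℝ) : ℝ :=
  (z ^ 2 * x / (z ^ 2 + 1) - 1) * (x ^ 2 + (z ^ 2 / (z ^ 2 + 1)) * x + 1)

/-- `X₀ = {(x,y,z) ∈ ℝ³ : y² + g₀(x,z) = 0}`. -/
def X₀ : Set (ℝ × ℝ × ℝ) := {w | w.2.1 ^ 2 + g₀ w.1 w.2.2 = 0}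

/-- The map `p : X₀ → ℝ`, `p(x,y,z) = x − z²`. -/
def pMap : ↥X₀ → ℝ := fun w => w.1.1 - w.1.2.2 ^ 2

/-- The map `Ψ : ℝ³ → ℝ²`, `Ψ(x,y,z) = (y² + g₀(x,z), x − z²)`. -/
def Ψ : ℝ × ℝ × ℝ → ℝ × ℝ :=
  fun w => (w.2.1 ^ 2 + g₀ w.1 w.2.2, w.1 - w.2.2 ^ 2)

/-!
Write `ν z = z²/(z²+1) ∈ [0,1)`, so that `g₀ x z = (ν z * x - 1) * (x² + ν z * x + 1)` with a
positive second factor. On `X₀` this forces `ν z * x ≤ 1`, i.e. `z² x ≤ z² + 1`; substituting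
`x = t + z²` bounds `z²`, then `x` and `y`, in terms of `t = p(x,y,z)`, so preimages of compact
sets are closed and bounded.

For the submersion, `∂_x Ψ` has second component `1`. If `y ≠ 0`, `∂_y Ψ = (2y, 0)`. If `y = 0`
then `ν z * x = 1`, and along `(2z, 0, 1)`, which is tangent to the fibres of `p`, the first factor
of `g₀` has nonzero derivative while the second is positive.
-/

def ν (z : ℝ) : ℝ := z ^ 2 / (z ^ 2 + 1)

lemma ν_nonneg (z : ℝ) : 0 ≤ ν z := by unfold ν; positivity

lemma ν_lt_one (z : ℝ) : ν z < 1 := by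
  rw [ν, div_lt_one (by positivity)]; linarith

lemma abs_ν_mul_le (z x : ℝ) : |ν z * x| ≤ |x| := by
  rw [abs_mul, abs_of_nonneg (ν_nonneg z)]
  exact mul_le_of_le_one_left (abs_nonneg x) (ν_lt_one z).le

lemma sq_add_ν_mul_add_one_pos (x z : ℝ) : 0 < x ^ 2 + ν z * x + 1 := by
  nlinarith [sq_nonneg (2 * x + ν z), ν_nonneg z, ν_lt_one z]

lemma g₀_eq (x z : ℝ) : g₀ x z = (ν z * x - 1) * (x ^ 2 + ν z * x + 1) := by
  simp only [g₀, ν, div_mul_eq_mul_div]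

lemma mem_X₀_iff {x y z : ℝ} :
    (x, y, z) ∈ X₀ ↔ y ^ 2 = (1 - ν z * x) * (x ^ 2 + ν z * x + 1) := by
  simp only [X₀, Set.mem_ofPred_eq, g₀_eq]
  constructor <;> intro h <;> linarith

lemma ν_mul_le_one_of_mem_X₀ {x y z : ℝ} (h : (x, y, z) ∈ X₀) : ν z * x ≤ 1 := by
  have := nonneg_of_mul_nonneg_left (mem_X₀_iff.mp h ▸ sq_nonneg y)
    (sq_add_ν_mul_add_one_pos x z)
  linarith

lemma y_sq_le_of_mem_X₀ {x y z : ℝ} (h : (x, y, z) ∈ X₀) : y ^ 2 ≤ (1 + |x|) ^ 3 := by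
  have hνx := abs_le.mp (abs_ν_mul_le z x)
  rw [mem_X₀_iff.mp h, pow_succ' (1 + |x|) 2]
  refine mul_le_mul (by linarith) ?_ ?_ (by positivity)
  · nlinarith [sq_abs x]
  · exact (sq_add_ν_mul_add_one_pos x z).le

lemma z_sq_le_of_mem_X₀ {x y z M : ℝ} (h : (x, y, z) ∈ X₀) (hM : |x - z ^ 2| ≤ M) :
    z ^ 2 ≤ M + 2 := by
  have hzx : z ^ 2 * x ≤ z ^ 2 + 1 := by
    have := ν_mul_le_one_of_mem_X₀ h
    rwa [ν, div_mul_eq_mul_div, div_le_one (by positivity)] at this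
  obtain ⟨h₁, -⟩ := abs_le.mp hM
  nlinarith [abs_nonneg (x - z ^ 2), sq_nonneg z]

lemma isClosed_X₀ : IsClosed X₀ :=
  isClosed_eq (by unfold g₀; fun_prop (disch := intros; positivity)) continuous_const

lemma isBounded_X₀_inter (M : ℝ) :
    Bornology.IsBounded (X₀ ∩ {w | |w.1 - w.2.2 ^ 2| ≤ M}) := by
  refine ((Metric.isBounded_Icc (-(2 * M + 2)) (2 * M + 2)).prod
    ((Metric.isBounded_Icc (-√((2 * M + 3) ^ 3)) √((2 * M + 3) ^ 3)).prod
      (Metric.isBounded_Icc (-√(M + 2)) √(M + 2)))).subset ?_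
  rintro ⟨x, y, z⟩ ⟨h, hM : |x - z ^ 2| ≤ M⟩
  have hz := z_sq_le_of_mem_X₀ h hM
  have hx : |x| ≤ 2 * M + 2 := by
    obtain ⟨h₁, h₂⟩ := abs_le.mp hM
    exact abs_le.mpr ⟨by nlinarith [sq_nonneg z], by linarith⟩
  have hy : y ^ 2 ≤ (2 * M + 3) ^ 3 :=
    (y_sq_le_of_mem_X₀ h).trans (pow_le_pow_left₀ (by positivity) (by linarith) 3)
  exact ⟨abs_le.mp hx, abs_le.mp (Real.abs_le_sqrt hy), abs_le.mp (Real.abs_le_sqrt hz)⟩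

lemma continuous_pMap : Continuous pMap := by
  unfold pMap; fun_prop

lemma isCompact_pMap_preimage {K : Set ℝ} (hK : IsCompact K) : IsCompact (pMap ⁻¹' K) := by
  obtain ⟨M, hKM⟩ := hK.isBounded.subset_closedBall 0
  have hq : Continuous fun w : ℝ × ℝ × ℝ => w.1 - w.2.2 ^ 2 := by fun_prop
  rw [Subtype.isCompact_iff, show pMap ⁻¹' K = Subtype.val ⁻¹' ((fun w => w.1 - w.2.2 ^ 2) ⁻¹' K)
    from rfl, Subtype.image_preimage_coe]
  refine Metric.isCompact_of_isClosed_isBounded (isClosed_X₀.inter (hK.isClosed.preimage hq))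
    ((isBounded_X₀_inter M).subset fun w ⟨hw, hwK⟩ => ⟨hw, ?_⟩)
  simpa using hKM hwK

lemma mk_sqrt_mem_X₀ (t : ℝ) : ((t, √(t ^ 2 + 1), 0) : ℝ × ℝ × ℝ) ∈ X₀ := by
  simp [X₀, g₀, Real.sq_sqrt (by positivity : (0 : ℝ) ≤ t ^ 2 + 1)]

lemma LinearMap.surjective_of_triangular {K M : Type*} [Field K] [AddCommGroup M] [Module K M]
    (L : M →ₗ[K] K × K) {u v : M} (hu₁ : (L u).1 ≠ 0) (hu₂ : (L u).2 = 0) (hv : (L v).2 ≠ 0) :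
    Function.Surjective L := by
  rintro ⟨a, b⟩
  refine ⟨((a - b / (L v).2 * (L v).1) / (L u).1) • u + (b / (L v).2) • v, ?_⟩
  ext <;> simp only [map_add, map_smul, Prod.fst_add, Prod.snd_add, Prod.smul_fst,
    Prod.smul_snd, smul_eq_mul, hu₂] <;> field_simp <;> ring

lemma hasDerivAt_ν (z : ℝ) : HasDerivAt ν (2 * z / (z ^ 2 + 1) ^ 2) z :=
  ((hasDerivAt_pow 2 z).fun_div ((hasDerivAt_pow 2 z).add_const 1) (by positivity)).congr_deriv
    (by field_simp; ring)

lemma differentiable_Ψ : Differentiable ℝ Ψ := by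
  unfold Ψ g₀; fun_prop (disch := intros; positivity)

lemma fderiv_Ψ_apply_fst {w m : ℝ × ℝ × ℝ} {c : ℝ}
    (h : HasLineDerivAt ℝ (fun w => (Ψ w).1) c w m) :
    (fderiv ℝ Ψ w m).1 = c :=
  ((differentiable_Ψ w).hasFDerivAt.fst.hasLineDerivAt m).unique h

lemma fderiv_Ψ_apply_snd (w m : ℝ × ℝ × ℝ) :
    (fderiv ℝ Ψ w m).2 = m.1 - 2 * w.2.2 * m.2.2 := by
  refine ((differentiable_Ψ w).hasFDerivAt.snd.hasLineDerivAt m).unique ?_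
  have h : HasDerivAt (fun t : ℝ => (w.1 + t * m.1) - (w.2.2 + t * m.2.2) ^ 2)
      (m.1 - 2 * w.2.2 * m.2.2) 0 := by
    refine (((hasDerivAt_mul_const m.1).const_add w.1).fun_sub
      (((hasDerivAt_mul_const m.2.2).const_add w.2.2).fun_pow 2)).congr_deriv ?_
    simp
  simpa [HasLineDerivAt, Ψ] using h

lemma hasLineDerivAt_Ψ_fst_y (x y z : ℝ) :
    HasLineDerivAt ℝ (fun w => (Ψ w).1) (2 * y) (x, y, z) (0, 1, 0) := by
  have h : HasDerivAt (fun t : ℝ => (y + t) ^ 2 + g₀ x z) (2 * y) 0 := by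
    simpa using (((hasDerivAt_id (0 : ℝ)).const_add y).pow 2).add_const (g₀ x z)
  simpa [HasLineDerivAt, Ψ] using h

lemma hasLineDerivAt_Ψ_fst_of_ν_mul_eq_one {x z : ℝ} (h : ν z * x = 1) :
    HasLineDerivAt ℝ (fun w => (Ψ w).1)
      (2 * z * (x / (z ^ 2 + 1) ^ 2 + ν z) * (x ^ 2 + 2)) (x, 0, z) (2 * z, 0, 1) := by
  have hν : HasDerivAt (fun s => ν (z + s)) (2 * z / (z ^ 2 + 1) ^ 2) 0 :=
    HasDerivAt.comp_const_add z 0 (by simpa using hasDerivAt_ν z)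
  have hx : HasDerivAt (fun s : ℝ => x + s * (2 * z)) (2 * z) 0 :=
    (hasDerivAt_mul_const _).const_add x
  have hU := hν.fun_mul hx
  have hF := (hU.sub_const 1).fun_mul (((hx.fun_pow 2).fun_add hU).add_const 1)
  have hF' := hF.congr_deriv (by simp only [add_zero, zero_mul, h]; ring :
    _ = 2 * z * (x / (z ^ 2 + 1) ^ 2 + ν z) * (x ^ 2 + 2))
  simpa [HasLineDerivAt, Ψ, g₀_eq] using hF'

lemma surjective_fderiv_Ψ {w : ℝ × ℝ × ℝ} (hw : w ∈ X₀) : Function.Surjective (fderiv ℝ Ψ w) := by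
  obtain ⟨x, y, z⟩ := w
  have he₁ : (fderiv ℝ Ψ (x, y, z) (1, 0, 0)).2 ≠ 0 := by simp [fderiv_Ψ_apply_snd]
  rcases eq_or_ne y 0 with rfl | hy
  · have hνx : ν z * x = 1 := by
      have h0 : (1 - ν z * x) * (x ^ 2 + ν z * x + 1) = 0 := by
        simpa using (mem_X₀_iff.mp hw).symm
      linarith [(mul_eq_zero.mp h0).resolve_right (sq_add_ν_mul_add_one_pos x z).ne']
    have hz : z ≠ 0 := by rintro rfl; simp [ν] at hνx
    have hx : 0 < x := by nlinarith [ν_nonneg z]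
    refine LinearMap.surjective_of_triangular (fderiv ℝ Ψ (x, 0, z)).toLinearMap
      (u := (2 * z, 0, 1)) ?_ (by simp [fderiv_Ψ_apply_snd]) he₁
    rw [ContinuousLinearMap.coe_coe, fderiv_Ψ_apply_fst (hasLineDerivAt_Ψ_fst_of_ν_mul_eq_one hνx)]
    have := ν_nonneg z
    positivity
  · refine LinearMap.surjective_of_triangular (fderiv ℝ Ψ (x, y, z)).toLinearMap
      (u := (0, 1, 0)) ?_ (by simp [fderiv_Ψ_apply_snd]) he₁
    rw [ContinuousLinearMap.coe_coe, fderiv_Ψ_apply_fst (hasLineDerivAt_Ψ_fst_y x y z)]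
    positivity

/-- From the proof of Claim 2 of Section 5: `p` is a proper surjective submersion on
`X₀`; the surjectivity is witnessed by `p(t, √(t²+1), 0) = t`. -/
theorem pMap_proper_surjective_submersion :
    (Continuous pMap ∧ ∀ K : Set ℝ, IsCompact K → IsCompact (pMap ⁻¹' K)) ∧
    (Function.Surjective pMap ∧
      ∀ t : ℝ, ∃ hmem : ((t, Real.sqrt (t ^ 2 + 1), 0) : ℝ × ℝ × ℝ) ∈ X₀,
        pMap ⟨(t, Real.sqrt (t ^ 2 + 1), 0), hmem⟩ = t) ∧
    (∀ w ∈ X₀, Function.Surjective (fderiv ℝ Ψ w)) := by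
  have hsection (t : ℝ) : pMap ⟨(t, √(t ^ 2 + 1), 0), mk_sqrt_mem_X₀ t⟩ = t := by simp [pMap]
  exact ⟨⟨continuous_pMap, fun K => isCompact_pMap_preimage⟩,
    ⟨fun t => ⟨_, hsection t⟩, fun t => ⟨mk_sqrt_mem_X₀ t, hsection t⟩⟩,
    fun w => surjective_fderiv_Ψ⟩
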